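/- Conversely, if ‖(A − z)⁻¹‖ > 1/ε for z in the resolvent set of a bounded operator A on a Hilbert space, then there exists a bounded operator B with ‖B‖ ≤ 1 such that z is an eigenvalue of A + εB. -/

import Mathlib

/-- If `z ∈ ρ(A)` and `‖(A - z)⁻¹‖ > 1/ε`, then there is `B` with `‖B‖ ≤ 1`
such that `z` is an eigenvalue of `A + εB`. -/
theorem stmt_3 {H : Type*} [NormedAddCommGroup H] [InnerProductSpace ℂ H] [CompleteSpace H]
    (A : H →L[ℂ] H) (ε : ℝ) (hε : 0 < ε) (z : ℂ)
    (hz : z ∉ spectrum ℂ A)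
    (hres : 1 / ε < ‖Ring.inverse (A - algebraMap ℂ (H →L[ℂ] H) z)‖) :
    ∃ B : H →L[ℂ] H, ‖B‖ ≤ 1 ∧
      ∃ v : H, v ≠ 0 ∧ (A + (ε : ℂ) • B) v = z • v := by
  set T := A - algebraMap ℂ (H →L[ℂ] H) z with hT
  set R := Ring.inverse T with hR
  have hunit : IsUnit T := by
    have := (spectrum.notMem_iff.mp hz).neg
    simpa [hT, neg_sub] using this
  have hRT : T ∘L R = 1 := by
    exact Ring.mul_inverse_cancel T hunit
  -- pick u with ‖R u‖ > ‖u‖ / ε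
  obtain ⟨u, hu⟩ : ∃ u : H, ‖u‖ / ε < ‖R u‖ := by
    by_contra h
    push_neg at h
    have : ‖R‖ ≤ 1 / ε := by
      apply R.opNorm_le_bound (by positivity)
      intro x
      calc ‖R x‖ ≤ ‖x‖ / ε := h x
        _ = 1 / ε * ‖x‖ := by ring
    linarith
  set v := R u with hv
  have hvnorm : 0 < ‖v‖ := lt_of_le_of_lt (by positivity) hu
  have hv0 : v ≠ 0 := by simpa using hvnorm.ne'
  have hunorm : ‖u‖ < ε * ‖v‖ := by
    rwa [div_lt_iff₀ hε, mul_comm] at hu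
  set c : ℂ := -(1 / (ε * ‖v‖ ^ 2)) with hc
  set B : H →L[ℂ] H := c • (innerSL ℂ v).smulRight u with hB
  have hBv : B v = -((1 / ε : ℂ)) • u := by
    have hinner : (innerSL ℂ v) v = (‖v‖ : ℂ) ^ 2 := by
      simp [innerSL_apply_apply, inner_self_eq_norm_sq_to_K]
    have : B v = c • ((innerSL ℂ v) v • u) := rfl
    rw [this, hinner, smul_smul, hc]
    congr 1
    have hne : (‖v‖ : ℂ) ≠ 0 := by exact_mod_cast hvnorm.ne'
    have hεne : (ε : ℂ) ≠ 0 := by exact_mod_cast hε.ne'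
    field_simp
  refine ⟨B, ?_, v, hv0, ?_⟩
  · have hBnorm : ‖B‖ ≤ ‖c‖ * (‖v‖ * ‖u‖) := by
      calc ‖B‖ ≤ ‖c‖ * ‖(innerSL ℂ v).smulRight u‖ := norm_smul_le _ _
        _ ≤ ‖c‖ * (‖innerSL ℂ v‖ * ‖u‖) := by
            gcongr; exact ((innerSL ℂ v).norm_smulRight_apply u).le
        _ = ‖c‖ * (‖v‖ * ‖u‖) := by rw [innerSL_apply_norm]
    have hcnorm : ‖c‖ = 1 / (ε * ‖v‖ ^ 2) := by
      rw [hc, norm_neg, norm_div, norm_one, norm_mul, norm_pow]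
      simp [Complex.norm_real, abs_of_pos hε, abs_of_pos hvnorm]
    rw [hcnorm] at hBnorm
    have : 1 / (ε * ‖v‖ ^ 2) * (‖v‖ * ‖u‖) = ‖u‖ / (ε * ‖v‖) := by
      field_simp
    rw [this] at hBnorm
    have : ‖u‖ / (ε * ‖v‖) ≤ 1 := by
      rw [div_le_one (by positivity)]
      linarith
    linarith
  · have hTv : T v = u := by
      have := congrArg (fun f => f u) hRT
      simpa [hv] using this
    have hTv' : A v - z • v = u := by
      have : T v = A v - z • v := by
        simp [hT, ContinuousLinearMap.sub_apply, Module.algebraMap_end_apply]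
      rw [← this, hTv]
    have hεC : (ε : ℂ) • B v = -u := by
      rw [hBv, smul_smul]
      have hεne : (ε : ℂ) ≠ 0 := by exact_mod_cast hε.ne'
      rw [show (ε : ℂ) * -(1/ε : ℂ) = -1 by field_simp]
      simp
    calc (A + (ε : ℂ) • B) v = A v + (ε : ℂ) • B v := by
          simp [ContinuousLinearMap.add_apply]
      _ = A v + -u := by rw [hεC]
      _ = z • v := by rw [← hTv']; abel
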